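/- arXiv:1612.06606 — 8 statements merged into one kernel-verified Lean document; each statement's English description precedes it below -/
import Mathlib

section
/- If M is an uncountable closed subset of the unit interval [0,1], then there exists a strictly increasing (hence injective) function from [0,1] into M. -/
/-!
The points of `M` whose left and right neighbourhoods both meet `M` in uncountably many points
form a subset `C ⊆ M` that misses only countably many points of `M`, so `C` is uncountable, and
that is densely ordered: between two of its points lie uncountably many points of `M`, hence one
of `C`. By Cantor's back-and-forth argument `ℚ` embeds into `C` order-preservingly, and an
increasing `g : ℚ → M` extends to the strictly increasing `x ↦ sup {g q | q ≤ x}` on `ℝ`, whose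
values stay in `M` because `M` is closed.
-/

open Set

section Condensation

variable {α : Type*} [LinearOrder α]

def twoSidedCondensationPoints (s : Set α) : Set α :=
  {x ∈ s | (∀ y > x, ¬(s ∩ Ioo x y).Countable) ∧ ∀ y < x, ¬(s ∩ Ioo y x).Countable}

variable [TopologicalSpace α] [OrderTopology α] [SecondCountableTopology α]

theorem countable_setOf_countable_inter_Ioo_right (s : Set α) :
    {x ∈ s | ∃ y > x, (s ∩ Ioo x y).Countable}.Countable := by
  set t := {x ∈ s | ∃ y > x, (s ∩ Ioo x y).Countable}
  choose! y hxy hy using fun x (hx : x ∈ t) => hx.2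
  obtain ⟨T, hTt, hTc, hTU⟩ :=
    TopologicalSpace.isOpen_biUnion_countable t (fun x => Ioo x (y x)) fun _ _ => isOpen_Ioo
  set W := ⋃ x ∈ t, Ioo x (y x)
  have hcovered : (t ∩ W).Countable := by
    refine (hTc.biUnion fun x hx => hy x (hTt hx)).mono ?_
    rw [← hTU, inter_iUnion₂]
    exact iUnion₂_mono fun _ _ => inter_subset_inter_left _ fun z hz => hz.1
  have huncovered : (t \ W).Countable := by
    refine PairwiseDisjoint.countable_of_Ioo (y := y) ?_ fun x hx => hxy x hx.1
    intro a ha b hb hab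
    wlog hlt : a < b generalizing a b
    · exact (this hb ha hab.symm (hab.lt_or_gt.resolve_left hlt)).symm
    have hyb : y a ≤ b := not_lt.1 fun h => hb.2 (mem_biUnion ha.1 ⟨hlt, h⟩)
    exact disjoint_left.2 fun z hza hzb => (hza.2.trans_le hyb).not_gt hzb.1
  exact inter_union_sdiff t W ▸ hcovered.union huncovered

theorem countable_setOf_countable_inter_Ioo_left (s : Set α) :
    {x ∈ s | ∃ y < x, (s ∩ Ioo y x).Countable}.Countable := by
  refine (countable_setOf_countable_inter_Ioo_right (α := αᵒᵈ) s).mono ?_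
  rintro x ⟨hx, y, hyx, hy⟩
  refine ⟨hx, y, hyx, hy.mono ?_⟩
  exact inter_subset_inter_right _ fun z hz => ⟨hz.2, hz.1⟩

theorem countable_diff_twoSidedCondensationPoints (s : Set α) :
    (s \ twoSidedCondensationPoints s).Countable := by
  refine ((countable_setOf_countable_inter_Ioo_right s).union
    (countable_setOf_countable_inter_Ioo_left s)).mono ?_
  rintro x ⟨hx, hxC⟩
  by_cases hright : ∃ y > x, (s ∩ Ioo x y).Countable
  · exact Or.inl ⟨hx, hright⟩
  · refine Or.inr ⟨hx, ?_⟩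
    by_contra hleft
    push Not at hright hleft
    exact hxC ⟨hx, hright, hleft⟩

theorem not_countable_twoSidedCondensationPoints {s : Set α} (hs : ¬s.Countable) :
    ¬(twoSidedCondensationPoints s).Countable := fun h =>
  hs <| (h.union (countable_diff_twoSidedCondensationPoints s)).mono fun x hx =>
    (em (x ∈ twoSidedCondensationPoints s)).elim Or.inl fun h => Or.inr ⟨hx, h⟩

theorem exists_mem_twoSidedCondensationPoints_Ioo {s : Set α} {a b : α}
    (ha : a ∈ twoSidedCondensationPoints s) (hab : a < b) :
    ∃ c ∈ twoSidedCondensationPoints s, a < c ∧ c < b := by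
  by_contra! h
  refine ha.2.1 b hab ((countable_diff_twoSidedCondensationPoints s).mono ?_)
  exact fun z hz => ⟨hz.1, fun hzC => (h z hzC hz.2.1).not_gt hz.2.2⟩

instance (s : Set α) : DenselyOrdered (twoSidedCondensationPoints s) :=
  ⟨fun a _ hab =>
    let ⟨c, hc, hac, hcb⟩ := exists_mem_twoSidedCondensationPoints_Ioo a.2 hab
    ⟨⟨c, hc⟩, hac, hcb⟩⟩

theorem exists_strictMono_rat_of_not_countable {s : Set α} (hs : ¬s.Countable) :
    ∃ g : ℚ → α, StrictMono g ∧ ∀ q, g q ∈ s := by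
  have : Nontrivial (twoSidedCondensationPoints s) :=
    nontrivial_coe_sort.2 <| not_subsingleton_iff.1 fun h =>
      not_countable_twoSidedCondensationPoints hs h.countable
  obtain ⟨e⟩ := Order.embedding_from_countable_to_dense (α := ℚ)
    (β := twoSidedCondensationPoints s)
  exact ⟨fun q => e q, fun _ _ h => e.strictMono h, fun q => (e q).2.1⟩

end Condensation

section Extension

variable {α : Type*} [ConditionallyCompleteLinearOrder α] [TopologicalSpace α] [OrderTopology α]

theorem IsClosed.exists_strictMono_real_of_strictMono_rat {s : Set α} (hs : IsClosed s)
    {g : ℚ → α} (hg : StrictMono g) (hgs : ∀ q, g q ∈ s) :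
    ∃ f : ℝ → α, StrictMono f ∧ ∀ x, f x ∈ s := by
  let below (x : ℝ) : Set α := g '' {q : ℚ | (q : ℝ) ≤ x}
  have hne (x : ℝ) : (below x).Nonempty :=
    let ⟨q, hq⟩ := exists_rat_lt x
    ⟨g q, q, hq.le, rfl⟩
  have hub {x : ℝ} {q : ℚ} (hxq : x < q) : g q ∈ upperBounds (below x) := by
    rintro _ ⟨p, hp, rfl⟩
    exact hg.monotone (by exact_mod_cast hp.trans hxq.le)
  have hbdd (x : ℝ) : BddAbove (below x) :=
    let ⟨q, hq⟩ := exists_rat_gt x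
    ⟨g q, hub hq⟩
  refine ⟨fun x => sSup (below x), fun x y hxy => ?_, fun x => ?_⟩
  · obtain ⟨q₁, hxq₁, hq₁y⟩ := exists_rat_btwn hxy
    obtain ⟨q₂, hq₁q₂, hq₂y⟩ := exists_rat_btwn hq₁y
    calc sSup (below x) ≤ g q₁ := csSup_le (hne x) (hub hxq₁)
      _ < g q₂ := hg (by exact_mod_cast hq₁q₂)
      _ ≤ sSup (below y) := le_csSup (hbdd y) ⟨q₂, hq₂y.le, rfl⟩
  · refine closure_minimal ?_ hs (csSup_mem_closure (hne x) (hbdd x))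
    rintro _ ⟨q, -, rfl⟩
    exact hgs q

theorem IsClosed.exists_strictMono_real_of_not_countable [SecondCountableTopology α] {s : Set α}
    (hs : IsClosed s) (hunc : ¬s.Countable) : ∃ f : ℝ → α, StrictMono f ∧ ∀ x, f x ∈ s :=
  let ⟨_, hg, hgs⟩ := exists_strictMono_rat_of_not_countable hunc
  hs.exists_strictMono_real_of_strictMono_rat hg hgs

end Extension

theorem strictMono_into_uncountable_closed_general (M : Set ℝ)
    (hclosed : IsClosed M) (hunc : ¬ M.Countable) :
    ∃ f : Set.Icc (0:ℝ) 1 → ℝ, StrictMono f ∧ ∀ x, f x ∈ M := by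
  obtain ⟨f, hf, hfM⟩ := hclosed.exists_strictMono_real_of_not_countable hunc
  exact ⟨f ∘ (↑), hf.comp (Subtype.strictMono_coe _), fun x => hfM x⟩

/-- If `M` is an uncountable closed subset of `[0,1]`, then there is a strictly
increasing function from `[0,1]` into `M`. -/
theorem strictMono_into_uncountable_closed (M : Set ℝ)
    (hsub : M ⊆ Set.Icc 0 1) (hclosed : IsClosed M) (hunc : ¬ M.Countable) :
    ∃ f : Set.Icc (0:ℝ) 1 → ℝ, StrictMono f ∧ ∀ x, f x ∈ M :=
  strictMono_into_uncountable_closed_general M hclosed hunc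
end

section
/- If M is an uncountable closed subset of the unit interval [0,1], then there exists a continuous surjection from M (with the subspace topology) onto [0,1]. -/
/-!
An uncountable closed set of reals contains a closed copy of the Cantor space `ℕ → Bool`
(Cantor–Bendixson), and binary expansion maps the Cantor space continuously onto `[0, 1]`.
Tietze's theorem extends this map from the copy to all of `M`, and an extension of a
surjection is still surjective.
-/

open Topology

universe u v w

theorem TietzeExtension.Icc {a b : ℝ} (hab : a ≤ b) : TietzeExtension.{u} (Set.Icc a b) :=
  .of_retract ⟨Subtype.val, continuous_subtype_val⟩
    ⟨Set.projIcc a b hab, continuous_projIcc⟩ (by ext; simp)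

theorem Topology.IsClosedEmbedding.exists_continuous_surjective_extension
    {X₁ : Type w} {X : Type u} {Y : Type v} [TopologicalSpace X₁] [TopologicalSpace X]
    [NormalSpace X] [TopologicalSpace Y] [TietzeExtension.{u, v} Y] {e : X₁ → X}
    (he : IsClosedEmbedding e) {f : X₁ → Y} (hf : Continuous f)
    (hf_surj : Function.Surjective f) :
    ∃ g : X → Y, Continuous g ∧ Function.Surjective g := by
  obtain ⟨g, hg⟩ := ContinuousMap.exists_extension' he ⟨f, hf⟩
  exact ⟨g, g.continuous, .of_comp (g := e) (by rwa [hg])⟩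

theorem IsClosed.exists_nat_bool_isClosedEmbedding_of_not_countable {α : Type*}
    [TopologicalSpace α] [PolishSpace α] {C : Set α} (hC : IsClosed C) (hunc : ¬C.Countable) :
    ∃ j : (ℕ → Bool) → C, IsClosedEmbedding j := by
  obtain ⟨j, hjC, hj, hj_inj⟩ := hC.exists_nat_bool_injection_of_not_countable hunc
  exact ⟨Set.codRestrict j C fun x ↦ hjC ⟨x, rfl⟩,
    (hj.codRestrict _).isClosedEmbedding (hj_inj.codRestrict _)⟩

theorem continuous_surjection_onto_unitInterval_general (M : Set ℝ)
    (hclosed : IsClosed M) (hunc : ¬ M.Countable) :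
    ∃ f : M → Set.Icc (0:ℝ) 1, Continuous f ∧ Function.Surjective f := by
  obtain ⟨j, hj⟩ := hclosed.exists_nat_bool_isClosedEmbedding_of_not_countable hunc
  have := TietzeExtension.Icc.{0} zero_le_one
  exact hj.exists_continuous_surjective_extension Real.fromBinary_continuous
    Real.fromBinary_surjective

/-- If `M` is an uncountable closed subset of `[0,1]`, then there is a continuous
surjection from `M` (with the subspace topology) onto `[0,1]`. -/
theorem continuous_surjection_onto_unitInterval (M : Set ℝ)
    (hsub : M ⊆ Set.Icc 0 1) (hclosed : IsClosed M) (hunc : ¬ M.Countable) :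
    ∃ f : M → Set.Icc (0:ℝ) 1, Continuous f ∧ Function.Surjective f :=
  continuous_surjection_onto_unitInterval_general M hclosed hunc
end

section
/- If A is a subset of ℝ whose closure is uncountable, then A contains a subset that is order-isomorphic to ℚ. -/
/-!
Call `y` a left condensation point of `K = closure A` if `K ∩ (x, y)` is uncountable for all
`x < y`. All but countably many points of `K` are of this kind: by Lindelöf, `K` has only countably
many points that are not condensation points, and among the condensation points only the countably
many left-isolated ones can fail. So the left condensation points form an uncountable, densely
ordered set `C`. Embed `ℚ ×ₗ ℚ` into `C` and send `q` to a point of `A` between the images of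
`(q, 0)` and `(q, 1)`; such points exist because `A` is dense in `K`.
-/

open Set Filter Topology

theorem countable_setOf_exists_nhds_countable_inter {X : Type*} [TopologicalSpace X]
    [HereditarilyLindelofSpace X] (s : Set X) :
    {x ∈ s | ∃ U ∈ 𝓝 x, (U ∩ s).Countable}.Countable := by
  refine (HereditarilyLindelofSpace.isLindelof _).induction_on (p := Set.Countable)
    (fun _ _ hst ht ↦ ht.mono hst) (fun _ hS hc ↦ hS.sUnion hc) ?_
  rintro x ⟨-, U, hU, hUs⟩
  refine ⟨_, inter_mem_nhdsWithin _ hU, hUs.mono ?_⟩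
  exact fun y hy ↦ ⟨hy.2, hy.1.1⟩

section LeftCondensation

variable {α : Type*} [TopologicalSpace α] [LinearOrder α] [OrderTopology α]

def leftCondensationPts (s : Set α) : Set α :=
  {y ∈ s | ∀ x < y, ¬(s ∩ Ioo x y).Countable}

theorem countable_diff_leftCondensationPts [SecondCountableTopology α] (s : Set α) :
    (s \ leftCondensationPts s).Countable := by
  set N := {x ∈ s | ∃ U ∈ 𝓝 x, (U ∩ s).Countable}
  set P := s \ N
  -- A point of `P` bounding a countable piece of `s` on the left is left-isolated in `P`,
  -- since every point of `P` inside that piece would lie in `N`.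
  have hisolated : s \ leftCondensationPts s ⊆ N ∪ {y ∈ P | 𝓝[P ∩ Iio y] y = ⊥} := by
    rintro y ⟨hys, hy⟩
    by_cases hyN : y ∈ N
    · exact Or.inl hyN
    obtain ⟨x, hxy, hcount⟩ : ∃ x < y, (s ∩ Ioo x y).Countable := by
      simpa [leftCondensationPts, hys] using hy
    refine Or.inr ⟨⟨hys, hyN⟩, empty_mem_iff_bot.1 ?_⟩
    refine mem_of_superset (inter_mem_nhdsWithin _ (Ioi_mem_nhds hxy)) ?_
    rintro z ⟨⟨⟨hzs, hzN⟩, hzy⟩, hxz⟩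
    exact hzN ⟨hzs, Ioo x y, Ioo_mem_nhds hxz hzy, by rwa [inter_comm]⟩
  exact ((countable_setOf_exists_nhds_countable_inter s).union
    countable_setOfPred_isolated_left_within).mono hisolated

theorem exists_mem_leftCondensationPts_Ioo [SecondCountableTopology α] {s : Set α} {x y : α}
    (hy : y ∈ leftCondensationPts s) (hxy : x < y) :
    ∃ z ∈ leftCondensationPts s, z ∈ Ioo x y := by
  by_contra! h
  refine hy.2 x hxy ((countable_diff_leftCondensationPts s).mono ?_)
  exact fun z hz ↦ ⟨hz.1, fun hzC ↦ h z hzC hz.2⟩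

instance [SecondCountableTopology α] (s : Set α) : DenselyOrdered (leftCondensationPts s) :=
  ⟨fun _ y hxy ↦
    let ⟨z, hzC, hz⟩ := exists_mem_leftCondensationPts_Ioo y.2 hxy
    ⟨⟨z, hzC⟩, hz.1, hz.2⟩⟩

end LeftCondensation

theorem exists_strictMono_rat_of_forall_inter_Ioo_nonempty {α : Type*} [LinearOrder α]
    {C A : Set α} [Nontrivial C] [DenselyOrdered C]
    (hA : ∀ x ∈ C, ∀ y ∈ C, x < y → (A ∩ Ioo x y).Nonempty) :
    ∃ f : ℚ → α, StrictMono f ∧ ∀ q, f q ∈ A := by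
  have : Countable (ℚ ×ₗ ℚ) := inferInstanceAs (Countable (ℚ × ℚ))
  obtain ⟨e⟩ := Order.embedding_from_countable_to_dense (α := ℚ ×ₗ ℚ) (β := C)
  have hpick (q : ℚ) : (A ∩ Ioo (e (toLex (q, 0)) : α) (e (toLex (q, 1)))).Nonempty :=
    hA _ (e _).2 _ (e _).2 (e.strictMono (Prod.Lex.toLex_lt_toLex.2 (.inr ⟨rfl, zero_lt_one⟩)))
  choose f hfA hf using hpick
  refine ⟨f, fun q r hqr ↦ ?_, hfA⟩
  calc f q < e (toLex (q, 1)) := (hf q).2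
    _ < e (toLex (r, 0)) := e.strictMono (Prod.Lex.toLex_lt_toLex.2 (.inl hqr))
    _ < f r := (hf r).1

/-- If the closure of `A ⊆ ℝ` is uncountable, then `A` contains a subset
order-isomorphic to `ℚ`, i.e. there is a strictly increasing map `ℚ → ℝ`
whose range lies in `A`. -/
theorem exists_rat_order_copy_of_uncountable_closure (A : Set ℝ)
    (h : ¬ (closure A).Countable) :
    ∃ f : ℚ → ℝ, StrictMono f ∧ ∀ q, f q ∈ A := by
  set C := leftCondensationPts (closure A)
  have hC : ¬ C.Countable := fun hC ↦ h ((countable_diff_leftCondensationPts _).of_sdiff hC)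
  have : Nontrivial C :=
    nontrivial_coe_sort.2 (not_subsingleton_iff.1 fun hsub ↦ hC hsub.countable)
  refine exists_strictMono_rat_of_forall_inter_Ioo_nonempty (C := C) fun x _ y hy hxy ↦ ?_
  obtain ⟨z, hzC, hz⟩ := exists_mem_leftCondensationPts_Ioo hy hxy
  exact (closure_inter_open_nonempty_iff isOpen_Ioo).1 ⟨z, hzC.1, hz⟩
end

section
/- If A is a subset of ℝ that contains a subset order-isomorphic to ℚ, then the closure of A contains a nonempty perfect set; in particular there is an injection from ℝ into the closure of A, so the closure of A has the cardinality of the continuum. -/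
open Set

lemma aux_g_mem (A : Set ℝ) (f : ℚ → ℝ) (hf : StrictMono f) (hA : ∀ q, f q ∈ A) :
    ∃ g : ℝ → ℝ, StrictMono g ∧ ∀ x, g x ∈ closure A := by
  refine ⟨fun x => sSup (f '' {q : ℚ | (q : ℝ) < x}), ?_, ?_⟩
  · intro x y hxy
    obtain ⟨q1, hq1, hq1'⟩ := exists_rat_btwn hxy
    obtain ⟨q2, hq2, hq2'⟩ := exists_rat_btwn hq1'
    have hne : (f '' {q : ℚ | (q : ℝ) < x}).Nonempty := by
      obtain ⟨r, hr⟩ := exists_rat_lt x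
      exact ⟨f r, mem_image_of_mem _ hr⟩
    have hbd : BddAbove (f '' {q : ℚ | (q : ℝ) < y}) := by
      obtain ⟨r, hr⟩ := exists_rat_gt y
      refine ⟨f r, ?_⟩
      rintro _ ⟨q, hq, rfl⟩
      exact (hf.le_iff_le).2 (by exact_mod_cast (hq.trans hr).le)
    have h1 : sSup (f '' {q : ℚ | (q : ℝ) < x}) ≤ f q1 := by
      apply csSup_le hne
      rintro _ ⟨q, hq, rfl⟩
      exact (hf.le_iff_le).2 (by exact_mod_cast (lt_trans hq hq1).le)
    have h2 : f q2 ≤ sSup (f '' {q : ℚ | (q : ℝ) < y}) :=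
      le_csSup hbd (mem_image_of_mem _ hq2')
    calc sSup (f '' {q : ℚ | (q : ℝ) < x}) ≤ f q1 := h1
      _ < f q2 := hf (by exact_mod_cast hq2)
      _ ≤ _ := h2
  · intro x
    have hne : (f '' {q : ℚ | (q : ℝ) < x}).Nonempty := by
      obtain ⟨r, hr⟩ := exists_rat_lt x
      exact ⟨f r, mem_image_of_mem _ hr⟩
    have hbd : BddAbove (f '' {q : ℚ | (q : ℝ) < x}) := by
      obtain ⟨r, hr⟩ := exists_rat_gt x
      refine ⟨f r, ?_⟩
      rintro _ ⟨q, hq, rfl⟩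
      exact (hf.le_iff_le).2 (by exact_mod_cast (hq.trans hr).le)
    have := csSup_mem_closure hne hbd
    refine closure_mono ?_ this
    rintro _ ⟨q, _, rfl⟩
    exact hA q

/-- If `A ⊆ ℝ` contains a subset order-isomorphic to `ℚ`, then the closure of
`A` contains a nonempty perfect set; in particular there is an injection of `ℝ`
into the closure of `A`, so the closure of `A` has the cardinality of the
continuum. -/
theorem closure_continuum_of_rat_order_copy (A : Set ℝ)
    (h : ∃ f : ℚ → ℝ, StrictMono f ∧ ∀ q, f q ∈ A) :
    (∃ P : Set ℝ, P ⊆ closure A ∧ P.Nonempty ∧ IsClosed P ∧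
        ∀ x ∈ P, AccPt x (Filter.principal P)) ∧
    (∃ g : ℝ → closure A, Function.Injective g) ∧
    Cardinal.mk (closure A) = Cardinal.continuum := by
  obtain ⟨f, hf, hA⟩ := h
  obtain ⟨g, hg, hgmem⟩ := aux_g_mem A f hf hA
  have hginj : Function.Injective g := hg.injective
  have hinj : ∃ g' : ℝ → closure A, Function.Injective g' :=
    ⟨fun x => ⟨g x, hgmem x⟩, fun a b hab => hginj (by simpa using congrArg Subtype.val hab)⟩
  have hcard : Cardinal.mk (closure A) = Cardinal.continuum := by
    apply le_antisymm
    · calc Cardinal.mk (closure A) ≤ Cardinal.mk ℝ := Cardinal.mk_le_of_injective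
            (f := (Subtype.val : closure A → ℝ)) Subtype.val_injective
        _ = Cardinal.continuum := Cardinal.mk_real
    · obtain ⟨g', hg'⟩ := hinj
      calc Cardinal.continuum = Cardinal.mk ℝ := Cardinal.mk_real.symm
        _ ≤ Cardinal.mk (closure A) := Cardinal.mk_le_of_injective hg'
  refine ⟨?_, hinj, hcard⟩
  have hunc : ¬(closure A).Countable := by
    intro hc
    have := hc.le_aleph0
    rw [hcard] at this
    exact (this.trans_lt Cardinal.aleph0_lt_continuum).ne rfl
  obtain ⟨D, hD, hDne, hDsub⟩ :=
    exists_perfect_nonempty_of_isClosed_of_not_countable isClosed_closure hunc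
  exact ⟨D, hDsub, hDne, hD.closed, fun x hx => hD.acc x hx⟩
end

section
/- Let F ⊆ ℝ be closed and let C₁, C₂ ⊆ ℝ be countable. Then the set (F \ C₁) ∪ C₂ is either countable or admits an injection from ℝ into it. -/
/-!
If `F` is countable, so is `(F \ C₁) ∪ C₂`. Otherwise `F` contains a Cantor set (Cantor–Bendixson),
so `𝔠 ≤ #F`, and since `ℵ₀ < 𝔠`, deleting the countable set `C₁` still leaves at least `𝔠` points.
-/

open Cardinal Set

universe u

theorem Cardinal.le_mk_sdiff_of_countable {α : Type*} {κ : Cardinal} {s t : Set α}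
    (hκ : ℵ₀ < κ) (hs : κ ≤ #s) (ht : t.Countable) : κ ≤ #(s \ t : Set α) := by
  by_contra! hlt
  have hsum : #(s \ t : Set α) + #t < κ := add_lt_of_lt hκ.le hlt (ht.le_aleph0.trans_lt hκ)
  exact (hs.trans (le_mk_sdiff_add_mk s t)).not_gt hsum

theorem IsClosed.continuum_le_mk_of_not_countable {α : Type u} [TopologicalSpace α]
    [PolishSpace α] {C : Set α} (hC : IsClosed C) (hunc : ¬C.Countable) : 𝔠 ≤ #C := by
  obtain ⟨f, hfC, -, hf⟩ := hC.exists_nat_bool_injection_of_not_countable hunc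
  calc 𝔠 = lift.{u} #(ℕ → Bool) := by simp
    _ = #(range f) := (mk_range_eq_of_injective hf).symm.trans (lift_uzero _)
    _ ≤ #C := mk_le_mk_of_subset hfC

/-- For a closed `F ⊆ ℝ` and countable `C₁ C₂ ⊆ ℝ`, the set `(F \ C₁) ∪ C₂`
is either countable or admits an injection from `ℝ` into it. -/
theorem diff_union_countable_or_continuum (F C₁ C₂ : Set ℝ)
    (hF : IsClosed F) (hC₁ : C₁.Countable) (hC₂ : C₂.Countable) :
    ((F \ C₁) ∪ C₂).Countable ∨ ∃ f : ℝ → ((F \ C₁) ∪ C₂ : Set ℝ), Function.Injective f := by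
  by_cases hFc : F.Countable
  · exact Or.inl ((hFc.mono sdiff_subset).union hC₂)
  · have hdiff : 𝔠 ≤ #(F \ C₁ : Set ℝ) :=
      le_mk_sdiff_of_countable aleph0_lt_continuum (hF.continuum_le_mk_of_not_countable hFc) hC₁
    obtain ⟨f⟩ : #ℝ ≤ #((F \ C₁) ∪ C₂ : Set ℝ) :=
      mk_real.trans_le (hdiff.trans (mk_le_mk_of_subset subset_union_left))
    exact Or.inr ⟨f, f.injective⟩
end

section
/- Let P ⊆ ℝ be a nonempty perfect set and let L = { x ∈ P : there exists δ > 0 with (x, x+δ) ∩ P = ∅ } be the set of points of P that are left endpoints of connected components of the complement of P. Then P \ L is uncountable, and P \ L is densely ordered: for all x, y ∈ P \ L with x < y there exists z ∈ P \ L with x < z < y. -/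
open Set Filter

private lemma aux_L_countable (P : Set ℝ) :
    {x ∈ P | ∃ δ > 0, Set.Ioo x (x + δ) ∩ P = ∅}.Countable := by
  set L := {x ∈ P | ∃ δ > 0, Set.Ioo x (x + δ) ∩ P = ∅} with hLdef
  have key : ∀ x ∈ L, ∃ q : ℚ, x < (q : ℝ) ∧ Set.Ioo x (q : ℝ) ∩ P = ∅ := by
    intro x hx
    obtain ⟨hxP, δ, hδ, hgap⟩ := hx
    obtain ⟨q, hq1, hq2⟩ := exists_rat_btwn (show x < x + δ by linarith)
    exact ⟨q, hq1, Set.eq_empty_of_subset_empty (by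
      rw [← hgap]; exact Set.inter_subset_inter_left _ (Set.Ioo_subset_Ioo_right hq2.le))⟩
  choose f hf1 hf2 using key
  classical
  rw [Set.countable_iff_exists_injOn]
  refine ⟨fun x => if h : x ∈ L then Encodable.encode (f x h) else 0, ?_⟩
  intro a ha b hb hab
  simp only [dif_pos ha, dif_pos hb] at hab
  have hfab : f a ha = f b hb := Encodable.encode_injective hab
  rcases lt_trichotomy a b with hlt | heq | hgt
  · have hbP : b ∈ P := hb.1
    have hb_lt : b < (f a ha : ℝ) := by rw [hfab]; exact hf1 b hb
    have hmem : b ∈ Set.Ioo a ((f a ha : ℝ)) ∩ P := ⟨⟨hlt, hb_lt⟩, hbP⟩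
    rw [hf2 a ha] at hmem
    exact absurd hmem (Set.notMem_empty b)
  · exact heq
  · have haP : a ∈ P := ha.1
    have ha_lt : a < (f b hb : ℝ) := by rw [← hfab]; exact hf1 a ha
    have hmem : a ∈ Set.Ioo b ((f b hb : ℝ)) ∩ P := ⟨⟨hgt, ha_lt⟩, haP⟩
    rw [hf2 b hb] at hmem
    exact absurd hmem (Set.notMem_empty a)

private lemma aux_perfect_uncountable (C : Set ℝ) (hC : Perfect C) (hne : C.Nonempty) :
    ¬ C.Countable := by
  intro hcnt
  obtain ⟨f, hrange, -, hinj⟩ := hC.exists_nat_bool_injection hne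
  have hcu : (Set.univ : Set (ℕ → Bool)).Countable := by
    have := (hcnt.mono hrange).preimage hinj
    simpa [Set.preimage_range] using this
  have h : Countable (ℕ → Bool) := Set.countable_univ_iff.mp hcu
  have h1 : (Cardinal.mk (ℕ → Bool)) ≤ Cardinal.aleph0 := Cardinal.mk_le_aleph0
  rw [Cardinal.mk_arrow] at h1
  simp [Cardinal.mk_bool, Cardinal.mk_nat] at h1
  exact absurd h1 (not_le.mpr (Cardinal.cantor _))

/-- Let `P ⊆ ℝ` be a nonempty perfect set and let `L` be the set of points of
`P` that are right-isolated in `P` (left endpoints of complementary intervals).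
Then `P \ L` is uncountable and densely ordered. -/
theorem perfect_minus_left_endpoints_uncountable_and_dense (P : Set ℝ)
    (hclosed : IsClosed P) (hacc : ∀ x ∈ P, AccPt x (Filter.principal P))
    (hne : P.Nonempty)
    (L : Set ℝ) (hL : L = {x ∈ P | ∃ δ > 0, Set.Ioo x (x + δ) ∩ P = ∅}) :
    ¬ (P \ L).Countable ∧
      ∀ x ∈ P \ L, ∀ y ∈ P \ L, x < y → ∃ z ∈ P \ L, x < z ∧ z < y := by
  have hLc : L.Countable := hL ▸ aux_L_countable P
  have hPperf : Perfect P := ⟨hclosed, hacc⟩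
  have hPunc : ¬ P.Countable := aux_perfect_uncountable P hPperf hne
  constructor
  · intro hc
    exact hPunc ((hc.union hLc).mono (fun p hp => by
      by_cases h : p ∈ L
      · exact Or.inr h
      · exact Or.inl ⟨hp, h⟩))
  · intro x hx y hy hxy
    -- P ∩ Ioo x y is preperfect and nonempty
    have hpre : Preperfect (Set.Ioo x y ∩ P) := hPperf.acc.open_inter isOpen_Ioo
    have hne2 : (Set.Ioo x y ∩ P).Nonempty := by
      have hxL : x ∉ L := hx.2
      have h1 : Set.Ioo x (x + (y - x)) ∩ P ≠ ∅ := by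
        intro h
        exact hxL (hL ▸ ⟨hx.1, y - x, by linarith, h⟩)
      rw [show x + (y - x) = y by ring] at h1
      exact Set.nonempty_iff_ne_empty.mpr h1
    set K := closure (Set.Ioo x y ∩ P) with hK
    have hKperf : Perfect K := hpre.perfect_closure
    have hKne : K.Nonempty := hne2.closure
    have hKunc : ¬ K.Countable := aux_perfect_uncountable K hKperf hKne
    have hKsub : K ⊆ P ∩ Set.Icc x y := by
      rw [hK]
      refine closure_minimal ?_ (hclosed.inter isClosed_Icc)
      exact fun p hp => ⟨hp.2, Set.Ioo_subset_Icc_self hp.1⟩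
    have : ¬ (K \ (L ∪ {x, y})).Countable → (K \ (L ∪ {x, y})).Nonempty := by
      intro h
      rcases Set.eq_empty_or_nonempty (K \ (L ∪ {x, y})) with he | hne3
      · exact absurd (he ▸ Set.countable_empty) h
      · exact hne3
    obtain ⟨z, hzK, hz2⟩ := this (fun hc => hKunc (by
      have : K ⊆ (K \ (L ∪ {x, y})) ∪ (L ∪ {x, y}) := fun p hp => by
        by_cases h : p ∈ L ∪ {x, y}
        · exact Or.inr h
        · exact Or.inl ⟨hp, h⟩
      exact (hc.union (hLc.union ((Set.countable_singleton y).insert x))).mono this))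
    have hzP : z ∈ P := (hKsub hzK).1
    have hzI : z ∈ Set.Icc x y := (hKsub hzK).2
    simp only [Set.mem_union, Set.mem_insert_iff, Set.mem_singleton_iff, not_or] at hz2
    exact ⟨z, ⟨hzP, hz2.1⟩, lt_of_le_of_ne hzI.1 (Ne.symm hz2.2.1), lt_of_le_of_ne hzI.2 hz2.2.2⟩
end

section
/- Every nonempty subset A of ℝ that is dense-in-itself (every point of A is a limit point of A) contains a subset order-isomorphic to ℚ. -/
/-!
Every open interval `(u, v)` meeting a dense-in-itself set `A` contains a point `p ∈ A` such that
both `(u, p)` and `(p, v)` still meet `A`. Splitting intervals at such points recursively produces a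
binary tree of points of `A`; between two nodes there is always a third one, so the nodes form a
nontrivial densely ordered subset of `A`, into which `ℚ` embeds by Cantor's back-and-forth theorem.
-/

open Set Filter

variable {α : Type*} [LinearOrder α] {A : Set α}

theorem exists_splitting_point [TopologicalSpace α] [OrderTopology α]
    (hacc : ∀ x ∈ A, AccPt x (𝓟 A)) {u v : α} (h : (A ∩ Ioo u v).Nonempty) :
    ∃ p ∈ A ∩ Ioo u v, (A ∩ Ioo u p).Nonempty ∧ (A ∩ Ioo p v).Nonempty := by
  obtain ⟨x, hxA, hx⟩ := h
  obtain ⟨y, ⟨hy, hyA⟩, hyx⟩ := accPt_iff_nhds.1 (hacc x hxA) (Ioo u v) (Ioo_mem_nhds hx.1 hx.2)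
  obtain ⟨a, b, haA, hbA, ha, hb, hab⟩ :
      ∃ a b, a ∈ A ∧ b ∈ A ∧ a ∈ Ioo u v ∧ b ∈ Ioo u v ∧ a < b := by
    rcases hyx.lt_or_gt with h | h
    · exact ⟨y, x, hyA, hxA, hy, hx, h⟩
    · exact ⟨x, y, hxA, hyA, hx, hy, h⟩
  obtain ⟨w, ⟨hw, hwA⟩, hwa⟩ := accPt_iff_nhds.1 (hacc a haA) (Ioo u b) (Ioo_mem_nhds ha.1 hab)
  rcases hwa.lt_or_gt with hwa | haw
  · exact ⟨a, ⟨haA, ha⟩, ⟨w, hwA, hw.1, hwa⟩, ⟨b, hbA, hab, hb.2⟩⟩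
  · exact ⟨w, ⟨hwA, hw.1, hw.2.trans hb.2⟩, ⟨a, haA, ha.1, haw⟩, ⟨b, hbA, hw.2, hb.2⟩⟩

def IsSplitting (A : Set α) (mid : α → α → α) : Prop :=
  ∀ u v, (A ∩ Ioo u v).Nonempty →
    mid u v ∈ A ∩ Ioo u v ∧ (A ∩ Ioo u (mid u v)).Nonempty ∧ (A ∩ Ioo (mid u v) v).Nonempty

inductive SplitTree (mid : α → α → α) : α → α → α → Prop
  | root (u v : α) : SplitTree mid u v (mid u v)
  | left {u v x : α} : SplitTree mid u (mid u v) x → SplitTree mid u v x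
  | right {u v x : α} : SplitTree mid (mid u v) v x → SplitTree mid u v x

namespace SplitTree

variable {mid : α → α → α} {u v x y : α}

theorem mem (hmid : IsSplitting A mid) (huv : (A ∩ Ioo u v).Nonempty) (hx : SplitTree mid u v x) :
    x ∈ A ∩ Ioo u v := by
  induction hx with
  | root u v => exact (hmid u v huv).1
  | @left u v x _ ih =>
    obtain ⟨⟨-, hm⟩, hl, -⟩ := hmid u v huv
    obtain ⟨hxA, hx⟩ := ih hl
    exact ⟨hxA, hx.1, hx.2.trans hm.2⟩
  | @right u v x _ ih =>
    obtain ⟨⟨-, hm⟩, -, hr⟩ := hmid u v huv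
    obtain ⟨hxA, hx⟩ := ih hr
    exact ⟨hxA, hm.1.trans hx.1, hx.2⟩

theorem exists_lt (hmid : IsSplitting A mid) (huv : (A ∩ Ioo u v).Nonempty)
    (hx : SplitTree mid u v x) : ∃ y, SplitTree mid u v y ∧ y < x := by
  induction hx with
  | root u v => exact ⟨_, left (root _ _), (hmid _ _ (hmid u v huv).2.1).1.2.2⟩
  | @left u v x _ ih =>
    obtain ⟨y, hy, hyx⟩ := ih (hmid u v huv).2.1
    exact ⟨y, left hy, hyx⟩
  | @right u v x _ ih =>
    obtain ⟨y, hy, hyx⟩ := ih (hmid u v huv).2.2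
    exact ⟨y, right hy, hyx⟩

theorem exists_gt (hmid : IsSplitting A mid) (huv : (A ∩ Ioo u v).Nonempty)
    (hx : SplitTree mid u v x) : ∃ y, SplitTree mid u v y ∧ x < y := by
  induction hx with
  | root u v => exact ⟨_, right (root _ _), (hmid _ _ (hmid u v huv).2.2).1.2.1⟩
  | @left u v x _ ih =>
    obtain ⟨y, hy, hxy⟩ := ih (hmid u v huv).2.1
    exact ⟨y, left hy, hxy⟩
  | @right u v x _ ih =>
    obtain ⟨y, hy, hxy⟩ := ih (hmid u v huv).2.2
    exact ⟨y, right hy, hxy⟩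

theorem exists_between (hmid : IsSplitting A mid) (huv : (A ∩ Ioo u v).Nonempty)
    (hx : SplitTree mid u v x) (hy : SplitTree mid u v y) (hxy : x < y) :
    ∃ z, SplitTree mid u v z ∧ x < z ∧ z < y := by
  induction hx generalizing y with
  | root u v =>
    obtain ⟨-, hl, hr⟩ := hmid u v huv
    cases hy with
    | root => exact absurd hxy (lt_irrefl _)
    | left hy => exact absurd hxy (mem hmid hl hy).2.2.not_gt
    | right hy =>
      obtain ⟨z, hz, hzy⟩ := exists_lt hmid hr hy
      exact ⟨z, right hz, (mem hmid hr hz).2.1, hzy⟩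
  | @left u v x hx ih =>
    obtain ⟨-, hl, hr⟩ := hmid u v huv
    cases hy with
    | root =>
      obtain ⟨z, hz, hxz⟩ := exists_gt hmid hl hx
      exact ⟨z, left hz, hxz, (mem hmid hl hz).2.2⟩
    | left hy => exact (ih hl hy hxy).imp fun z ⟨hz, hxz⟩ ↦ ⟨left hz, hxz⟩
    | right hy => exact ⟨_, root u v, (mem hmid hl hx).2.2, (mem hmid hr hy).2.1⟩
  | @right u v x hx ih =>
    obtain ⟨-, hl, hr⟩ := hmid u v huv
    have hmx := (mem hmid hr hx).2.1
    cases hy with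
    | root => exact absurd hxy hmx.not_gt
    | left hy => exact absurd ((mem hmid hl hy).2.2.trans hmx) hxy.not_gt
    | right hy => exact (ih hr hy hxy).imp fun z ⟨hz, hxz⟩ ↦ ⟨right hz, hxz⟩

theorem denselyOrdered (hmid : IsSplitting A mid) (huv : (A ∩ Ioo u v).Nonempty) :
    DenselyOrdered {x // SplitTree mid u v x} where
  dense := fun ⟨_, hx⟩ ⟨_, hy⟩ hxy ↦
    let ⟨z, hz, hxz, hzy⟩ := exists_between hmid huv hx hy hxy
    ⟨⟨z, hz⟩, hxz, hzy⟩

theorem nontrivial (hmid : IsSplitting A mid) (huv : (A ∩ Ioo u v).Nonempty) :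
    Nontrivial {x // SplitTree mid u v x} :=
  let ⟨_, hy, hlt⟩ := exists_gt hmid huv (root u v)
  nontrivial_of_lt (⟨_, root u v⟩ : {x // SplitTree mid u v x}) ⟨_, hy⟩ hlt

end SplitTree

theorem exists_strictMono_rat_of_accPt [TopologicalSpace α] [OrderTopology α]
    (hacc : ∀ x ∈ A, AccPt x (𝓟 A)) {u v : α} (huv : (A ∩ Ioo u v).Nonempty) :
    ∃ f : ℚ → α, StrictMono f ∧ ∀ q, f q ∈ A := by
  choose! mid hmid using fun u v (h : (A ∩ Ioo u v).Nonempty) ↦ exists_splitting_point hacc h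
  have := SplitTree.denselyOrdered hmid huv
  have := SplitTree.nontrivial hmid huv
  obtain ⟨e⟩ := Order.embedding_from_countable_to_dense ℚ {x // SplitTree mid u v x}
  exact ⟨fun q ↦ e q, Subtype.strictMono_coe _ |>.comp e.strictMono,
    fun q ↦ (SplitTree.mem hmid huv (e q).2).1⟩

/-- Every nonempty dense-in-itself subset `A` of `ℝ` (every point of `A` is an
accumulation point of `A`) contains a subset order-isomorphic to `ℚ`. -/
theorem dense_in_itself_contains_rat_order_copy (A : Set ℝ)
    (hne : A.Nonempty) (hacc : ∀ x ∈ A, AccPt x (Filter.principal A)) :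
    ∃ f : ℚ → ℝ, StrictMono f ∧ ∀ q, f q ∈ A := by
  obtain ⟨a, ha⟩ := hne
  exact exists_strictMono_rat_of_accPt hacc ⟨a, ha, sub_one_lt a, lt_add_one a⟩
end

section
/- The set E = { ∑_{i∈s} 4^{-i} : s a finite nonempty set of positive integers } is nowhere dense in ℝ, and E is order-isomorphic to ℚ (with the order inherited from ℝ). -/
/-!
Truncating a finite sum `∑_{i ∈ s} rⁱ` (with `0 ≤ r < 1`) to the indices below `n` changes it by
at most `rⁿ / (1 - r)`, so all such sums lie in `2ⁿ` closed intervals of total length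
`(2r)ⁿ / (1 - r)`. For `r = 1/4` this tends to `0`, so the closure of `E` is a closed null set,
hence nowhere dense. `E` is countable, and appending a new, arbitrarily small power `4⁻ᵐ` to a sum
shows that `E` is densely ordered without endpoints; Cantor's back-and-forth theorem then gives
the order isomorphism with `ℚ`.
-/

open Finset

/-- `E`: the numbers `∑_{i ∈ s} 4⁻ⁱ` for a finite nonempty set `s` of positive
integers, i.e. the numbers in `(0,1)` with a finite binary expansion in which
every odd-numbered binary digit is `0`. -/
def quarticSet : Set ℝ :=
  {x | ∃ s : Finset ℕ, s.Nonempty ∧ (∀ i ∈ s, 0 < i) ∧ x = ∑ i ∈ s, (1/4 : ℝ) ^ i}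

open Filter MeasureTheory

section GeomSum

variable {K : Type*} [Field K] [LinearOrder K] [IsStrictOrderedRing K] {r : K}

theorem sum_pow_le_of_forall_le (hr₀ : 0 ≤ r) (hr₁ : r < 1) {n : ℕ} {u : Finset ℕ}
    (hu : ∀ i ∈ u, n ≤ i) : ∑ i ∈ u, r ^ i ≤ r ^ n / (1 - r) := by
  obtain ⟨N, huN⟩ := u.exists_nat_subset_range
  have hu_Ico : u ⊆ Ico n N := fun i hi => mem_Ico.2 ⟨hu i hi, mem_range.1 (huN hi)⟩
  calc ∑ i ∈ u, r ^ i ≤ ∑ i ∈ Ico n N, r ^ i :=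
        sum_le_sum_of_subset_of_nonneg hu_Ico fun i _ _ => pow_nonneg hr₀ i
    _ ≤ r ^ n / (1 - r) := geom_sum_Ico_le_of_lt_one hr₀ hr₁

theorem sum_pow_mem_Icc_sum_inter_range (hr₀ : 0 ≤ r) (hr₁ : r < 1) (s : Finset ℕ) (n : ℕ) :
    ∑ i ∈ s, r ^ i ∈
      Set.Icc (∑ i ∈ s ∩ range n, r ^ i) (∑ i ∈ s ∩ range n, r ^ i + r ^ n / (1 - r)) := by
  rw [← sum_inter_add_sum_sdiff s (range n)]
  have htail_le : ∑ i ∈ s \ range n, r ^ i ≤ r ^ n / (1 - r) :=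
    sum_pow_le_of_forall_le hr₀ hr₁ fun i hi => by simpa using (mem_sdiff.1 hi).2
  have htail_nonneg : 0 ≤ ∑ i ∈ s \ range n, r ^ i := sum_nonneg fun i _ => pow_nonneg hr₀ i
  constructor <;> linarith

end GeomSum

def finsetPowSums (r : ℝ) : Set ℝ := Set.range fun s : Finset ℕ => ∑ i ∈ s, r ^ i

section FinsetPowSums

variable {r : ℝ}

theorem finsetPowSums_subset_biUnion (hr₀ : 0 ≤ r) (hr₁ : r < 1) (n : ℕ) :
    finsetPowSums r ⊆ ⋃ t ∈ (range n).powerset,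
      Set.Icc (∑ i ∈ t, r ^ i) (∑ i ∈ t, r ^ i + r ^ n / (1 - r)) := by
  rintro _ ⟨s, rfl⟩
  exact Set.mem_biUnion (mem_powerset.2 inter_subset_right)
    (sum_pow_mem_Icc_sum_inter_range hr₀ hr₁ s n)

theorem volume_closure_finsetPowSums_le (hr₀ : 0 ≤ r) (hr₁ : r < 1) (n : ℕ) :
    volume (closure (finsetPowSums r)) ≤ ENNReal.ofReal ((2 * r) ^ n / (1 - r)) := by
  have hclosed : IsClosed (⋃ t ∈ (range n).powerset,
      Set.Icc (∑ i ∈ t, r ^ i) (∑ i ∈ t, r ^ i + r ^ n / (1 - r))) :=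
    (range n).powerset.finite_toSet.isClosed_biUnion fun _ _ => isClosed_Icc
  calc volume (closure (finsetPowSums r))
      ≤ ∑ t ∈ (range n).powerset,
          volume (Set.Icc (∑ i ∈ t, r ^ i) (∑ i ∈ t, r ^ i + r ^ n / (1 - r))) :=
        (measure_mono (closure_minimal (finsetPowSums_subset_biUnion hr₀ hr₁ n) hclosed)).trans
          (measure_biUnion_finset_le _ _)
    _ = ENNReal.ofReal ((2 * r) ^ n / (1 - r)) := by
        simp only [Real.volume_Icc, add_sub_cancel_left, sum_const, card_powerset, card_range,
          nsmul_eq_mul]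
        rw [← ENNReal.ofReal_natCast, ← ENNReal.ofReal_mul (by positivity)]
        congr 1
        push_cast
        ring

theorem volume_closure_finsetPowSums (hr₀ : 0 ≤ r) (hr : 2 * r < 1) :
    volume (closure (finsetPowSums r)) = 0 := by
  have hr₁ : r < 1 := by linarith
  have hlim : Tendsto (fun n : ℕ => ENNReal.ofReal ((2 * r) ^ n / (1 - r))) atTop (nhds 0) := by
    simpa using ENNReal.tendsto_ofReal
      ((tendsto_pow_atTop_nhds_zero_of_lt_one (by linarith) hr).div_const (1 - r))
  exact le_antisymm (ge_of_tendsto' hlim (volume_closure_finsetPowSums_le hr₀ hr₁)) bot_le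

theorem isNowhereDense_finsetPowSums (hr₀ : 0 ≤ r) (hr : 2 * r < 1) :
    IsNowhereDense (finsetPowSums r) :=
  (IsNowhereDense.of_isClosed_null isClosed_closure
    (volume_closure_finsetPowSums hr₀ hr)).mono subset_closure

end FinsetPowSums

theorem quarticSet_subset_finsetPowSums : quarticSet ⊆ finsetPowSums (1 / 4) := by
  rintro _ ⟨s, -, -, rfl⟩
  exact ⟨s, rfl⟩

theorem pow_mem_quarticSet {m : ℕ} (hm : 0 < m) : (1 / 4 : ℝ) ^ m ∈ quarticSet :=
  ⟨{m}, singleton_nonempty m, by simpa using hm, by simp⟩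

theorem eventually_add_pow_mem_quarticSet {x : ℝ} (hx : x ∈ quarticSet) :
    ∀ᶠ m in atTop, x + (1 / 4 : ℝ) ^ m ∈ quarticSet := by
  obtain ⟨s, hs, hpos, rfl⟩ := hx
  obtain ⟨N, hsN⟩ := s.exists_nat_subset_range
  filter_upwards [eventually_ge_atTop (N + 1)] with m hm
  have hms : m ∉ s := fun h => by have := mem_range.1 (hsN h); omega
  refine ⟨insert m s, insert_nonempty m s, ?_, by rw [sum_insert hms, add_comm]⟩
  simpa only [mem_insert, forall_eq_or_imp] using ⟨by omega, hpos⟩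

theorem eventually_quarter_pow_lt {ε : ℝ} (hε : 0 < ε) : ∀ᶠ m : ℕ in atTop, (1 / 4 : ℝ) ^ m < ε :=
  (tendsto_pow_atTop_nhds_zero_of_lt_one (by norm_num) (by norm_num)).eventually
    (gt_mem_nhds hε)

theorem exists_mem_quarticSet_between {x : ℝ} (hx : x ∈ quarticSet) {ε : ℝ} (hε : 0 < ε) :
    ∃ z ∈ quarticSet, x < z ∧ z < x + ε := by
  obtain ⟨m, hmem, hlt⟩ :=
    ((eventually_add_pow_mem_quarticSet hx).and (eventually_quarter_pow_lt hε)).exists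
  exact ⟨_, hmem, lt_add_of_pos_right x (by positivity), by linarith⟩

instance : Countable quarticSet :=
  ((Set.countable_range _).mono quarticSet_subset_finsetPowSums).to_subtype

instance : Nonempty quarticSet := ⟨⟨_, pow_mem_quarticSet one_pos⟩⟩

instance : DenselyOrdered quarticSet where
  dense := fun ⟨x, hx⟩ ⟨y, _⟩ hxy => by
    obtain ⟨z, hz, hxz, hzy⟩ := exists_mem_quarticSet_between hx (sub_pos.2 hxy)
    exact ⟨⟨z, hz⟩, hxz, by simpa using hzy⟩

instance : NoMaxOrder quarticSet where
  exists_gt := fun ⟨x, hx⟩ => by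
    obtain ⟨z, hz, hxz, -⟩ := exists_mem_quarticSet_between hx one_pos
    exact ⟨⟨z, hz⟩, hxz⟩

instance : NoMinOrder quarticSet where
  exists_lt := fun ⟨x, hx⟩ => by
    have hx₀ : 0 < x := by
      obtain ⟨s, hs, -, rfl⟩ := hx
      exact sum_pos (fun i _ => by positivity) hs
    obtain ⟨m, hm, hlt⟩ := ((eventually_gt_atTop 0).and (eventually_quarter_pow_lt hx₀)).exists
    exact ⟨⟨_, pow_mem_quarticSet hm⟩, hlt⟩

/-- The set `E` is nowhere dense in `ℝ` and is order-isomorphic to `ℚ`: there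
is a strictly increasing bijection from `ℚ` onto `E`. -/
theorem quarticSet_nowhereDense_and_rat_order_type :
    IsNowhereDense quarticSet ∧
      ∃ f : ℚ → ℝ, StrictMono f ∧ Set.range f = quarticSet := by
  refine ⟨(isNowhereDense_finsetPowSums (by norm_num) (by norm_num)).mono
    quarticSet_subset_finsetPowSums, ?_⟩
  obtain ⟨e⟩ := Order.iso_of_countable_dense ℚ quarticSet
  exact ⟨Subtype.val ∘ e, (Subtype.strictMono_coe _).comp e.strictMono,
    by rw [EquivLike.range_comp, Subtype.range_coe]⟩
end
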